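/- arXiv:1310.2800 — 7 statements merged into one kernel-verified Lean document; each statement's English description precedes it below -/
import Mathlib

section
/- Let l ≥ 5 be a prime and F a field such that the l-th cyclotomic polynomial Φ_l(X) is irreducible in F[x]. Then for any nonzero polynomials f(x), g(x) ∈ F[x], the degree of Φ_l(f(x), g(x)) equals (l−1)·max(deg f(x), deg g(x)). -/
/-!
Put `d = max (deg f) (deg g)`. Every term `f^j g^(l-1-j)` has degree at most `(l-1) d`, and its
coefficient there is `a^j b^(l-1-j)`, where `a`, `b` are the coefficients of `X^d` in `f`, `g`.
Hence the coefficient of `X^((l-1) d)` in `Φ_l(f,g)` is `Φ_l(a,b)`, and at least one of `a`, `b`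
is a leading coefficient, so nonzero. If `b ≠ 0` then `Φ_l(a,b) = b^(l-1) Φ_l(a/b)`, which cannot
vanish because `Φ_l`, being irreducible of degree `l - 1 ≥ 2`, has no root in `F`; the case
`a ≠ 0` is symmetric.
-/

open Polynomial

/-- The homogenized cyclotomic polynomial `Φ_l(f,g) = ∑_{j=0}^{l-1} f^j g^{l-1-j}`. -/
noncomputable def PhiH {F : Type*} [Field F] (l : ℕ) (f g : Polynomial F) : Polynomial F :=
  ∑ j ∈ Finset.range l, f ^ j * g ^ (l - 1 - j)

open Finset

theorem sub_one_mul_eq_mul_add_mul_of_mem_range {l d j : ℕ} (hj : j ∈ range l) :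
    (l - 1) * d = j * d + (l - 1 - j) * d := by
  rw [← add_mul, Nat.add_sub_cancel' (Nat.le_sub_one_of_lt (mem_range.mp hj))]

theorem natDegree_geom_sum_X {R : Type*} [Ring R] [Nontrivial R] {n : ℕ} (hn : n ≠ 0) :
    (∑ i ∈ range n, (X : R[X]) ^ i).natDegree = n - 1 := by
  have h := congrArg natDegree (mul_geom_sum (X : R[X]) n)
  rw [← C_1, (monic_X_sub_C 1).natDegree_mul (monic_geom_sum_X hn), natDegree_X_sub_C,
    natDegree_X_pow_sub_C] at h
  omega

theorem geom_sum₂_ne_zero_of_right_ne_zero {F : Type*} [Field F] {n : ℕ}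
    (hroot : ∀ z : F, ¬(∑ i ∈ range n, (X : F[X]) ^ i).IsRoot z) {x y : F} (hy : y ≠ 0) :
    ∑ i ∈ range n, x ^ i * y ^ (n - 1 - i) ≠ 0 := by
  have hfactor : ∑ i ∈ range n, x ^ i * y ^ (n - 1 - i) =
      y ^ (n - 1) * (∑ i ∈ range n, (X : F[X]) ^ i).eval (x / y) := by
    rw [eval_geom_sum, mul_sum]
    refine sum_congr rfl fun i hi => ?_
    rw [div_pow, ← Nat.sub_add_cancel (Nat.le_sub_one_of_lt (mem_range.mp hi)), pow_add,
      Nat.add_sub_cancel]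
    field_simp
  rw [hfactor]
  exact mul_ne_zero (pow_ne_zero _ hy) (hroot _)

section PhiH

variable {F : Type*} [Field F] {l d : ℕ} {f g : F[X]}

theorem natDegree_PhiH_le (hf : f.natDegree ≤ d) (hg : g.natDegree ≤ d) :
    (PhiH l f g).natDegree ≤ (l - 1) * d :=
  natDegree_sum_le_of_forall_le _ _ fun j hj => by
    rw [sub_one_mul_eq_mul_add_mul_of_mem_range hj]
    exact natDegree_mul_le.trans
      (add_le_add (natDegree_pow_le_of_le j hf) (natDegree_pow_le_of_le _ hg))

theorem coeff_PhiH_of_natDegree_le (hf : f.natDegree ≤ d) (hg : g.natDegree ≤ d) :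
    (PhiH l f g).coeff ((l - 1) * d) =
      ∑ j ∈ range l, f.coeff d ^ j * g.coeff d ^ (l - 1 - j) := by
  rw [PhiH, finsetSum_coeff]
  refine sum_congr rfl fun j hj => ?_
  rw [sub_one_mul_eq_mul_add_mul_of_mem_range hj,
    coeff_mul_add_eq_of_natDegree_le (natDegree_pow_le_of_le j hf) (natDegree_pow_le_of_le _ hg),
    coeff_pow_of_natDegree_le hf, coeff_pow_of_natDegree_le hg]

end PhiH

theorem degree_PhiH_general {F : Type*} [Field F] (l : ℕ) (hl5 : 5 ≤ l)
    (hirr : Irreducible (∑ i ∈ Finset.range l, (X : Polynomial F) ^ i))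
    (f g : Polynomial F) (hf : f ≠ 0) (hg : g ≠ 0) :
    (PhiH l f g).natDegree = (l - 1) * max f.natDegree g.natDegree := by
  have hroot : ∀ z : F, ¬(∑ i ∈ range l, (X : F[X]) ^ i).IsRoot z := fun _ =>
    hirr.not_isRoot_of_natDegree_ne_one (by rw [natDegree_geom_sum_X (by omega)]; omega)
  have htop : (PhiH l f g).coeff ((l - 1) * max f.natDegree g.natDegree) ≠ 0 := by
    rw [coeff_PhiH_of_natDegree_le (le_max_left _ _) (le_max_right _ _)]
    rcases max_choice f.natDegree g.natDegree with h | h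
    · rw [geom_sum₂_comm, h, coeff_natDegree]
      exact geom_sum₂_ne_zero_of_right_ne_zero hroot (leadingCoeff_ne_zero.mpr hf)
    · rw [h, coeff_natDegree]
      exact geom_sum₂_ne_zero_of_right_ne_zero hroot (leadingCoeff_ne_zero.mpr hg)
  exact (natDegree_PhiH_le (le_max_left _ _) (le_max_right _ _)).antisymm
    (le_natDegree_of_ne_zero htop)

theorem degree_PhiH {F : Type*} [Field F] (l : ℕ) (hl : l.Prime) (hl5 : 5 ≤ l)
    (hirr : Irreducible (∑ i ∈ Finset.range l, (X : Polynomial F) ^ i))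
    (f g : Polynomial F) (hf : f ≠ 0) (hg : g ≠ 0) :
    (PhiH l f g).natDegree = (l - 1) * max f.natDegree g.natDegree :=
  degree_PhiH_general l hl5 hirr f g hf hg
end

section
/- Let l ≥ 5 be a prime and F a field such that the l-th cyclotomic polynomial Φ_l(X) is irreducible in F[x]. Let f(x), g(x) ∈ F[x] be relatively prime with deg f(x) ≥ 1, and let h(x) be an irreducible factor of Φ_l(f(x), g(x)) in F[x]. Then for every natural number r, h(x) divides f(x)^r − g(x)^r if and only if l divides r. -/
/-!
Modulo `h`, the class of `g` is nonzero (as `f, g` are coprime), and `u = f/g` satisfies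
`u^l = 1` and `u ≠ 1`, so `u` has order `l` and `h ∣ f^r - g^r` just says `u^r = 1`.
Here `u ≠ 1` needs `l ≠ 0` in `F`: in characteristic `l` the cyclotomic polynomial
`Φ_l = (X - 1)^(l-1)` has the root `1` and degree `l - 1 > 1`, so is reducible.
-/

open Polynomial

open Finset

theorem natCast_ne_zero_of_irreducible_cyclotomic {F : Type*} [Field F] {p : ℕ} [Fact p.Prime]
    (hp : p ≠ 2) (hirr : Irreducible (cyclotomic p F)) : (p : F) ≠ 0 := by
  intro hp0
  have hroot : (cyclotomic p F).IsRoot 1 := by simp [hp0]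
  have hdeg : (cyclotomic p F).natDegree = 1 :=
    natDegree_eq_of_degree_eq_some (degree_eq_one_of_irreducible_of_root hirr hroot)
  rw [natDegree_cyclotomic, Nat.totient_prime Fact.out] at hdeg
  have := (Fact.out : p.Prime).two_le
  omega

theorem right_ne_zero_of_geom_sum₂_eq_zero {R : Type*} [CommRing R] [NoZeroDivisors R] {n : ℕ}
    (hn : n ≠ 0) {a b : R} (hab : a ≠ 0 ∨ b ≠ 0)
    (hsum : ∑ i ∈ range n, a ^ i * b ^ (n - 1 - i) = 0) : b ≠ 0 := by
  rintro rfl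
  have hpow := geom_sum₂_mul a 0 n
  rw [hsum, zero_mul, zero_pow hn, sub_zero] at hpow
  exact hab.elim (fun ha => ha (pow_eq_zero_iff hn |>.1 hpow.symm)) (· rfl)

theorem pow_eq_pow_iff_dvd_of_geom_sum₂_eq_zero {K : Type*} [Field K] {p : ℕ} [Fact p.Prime]
    (hp : (p : K) ≠ 0) {a b : K} (hb : b ≠ 0)
    (hsum : ∑ i ∈ range p, a ^ i * b ^ (p - 1 - i) = 0) (r : ℕ) : a ^ r = b ^ r ↔ p ∣ r := by
  have hab : a ≠ b := by
    rintro rfl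
    rw [geom_sum₂_self] at hsum
    simp [hp, hb] at hsum
  have hpow : a ^ p = b ^ p := by
    have := geom_sum₂_mul a b p
    rw [hsum, zero_mul] at this
    exact sub_eq_zero.1 this.symm
  have hord : orderOf (a / b) = p :=
    orderOf_eq_prime (by rw [div_pow, hpow, div_self (pow_ne_zero _ hb)])
      (by rwa [Ne, div_eq_one_iff_eq hb])
  rw [← hord, orderOf_dvd_iff_pow_eq_one, div_pow, div_eq_one_iff_eq (pow_ne_zero _ hb)]

theorem factor_PhiH_dvd_pow_sub_pow_iff_general {F : Type*} [Field F] (l : ℕ) (hl : l.Prime)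
    (hl5 : 5 ≤ l)
    (hirr : Irreducible (∑ i ∈ Finset.range l, (X : Polynomial F) ^ i))
    (f g : Polynomial F) (hfg : IsCoprime f g)
    (h : Polynomial F) (hh : Irreducible h) (hdvd : h ∣ PhiH l f g) :
    ∀ r : ℕ, h ∣ f ^ r - g ^ r ↔ l ∣ r := by
  have := Fact.mk hl
  have := Fact.mk hh
  have hlF : (l : F) ≠ 0 :=
    natCast_ne_zero_of_irreducible_cyclotomic (by omega) (by rwa [cyclotomic_prime])
  have hlK : (l : AdjoinRoot h) ≠ 0 := by
    simpa using (algebraMap F (AdjoinRoot h)).injective.ne hlF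
  have hsum : ∑ i ∈ range l, AdjoinRoot.mk h f ^ i * AdjoinRoot.mk h g ^ (l - 1 - i) = 0 := by
    simpa [PhiH, map_sum] using AdjoinRoot.mk_eq_zero.2 hdvd
  have hg : AdjoinRoot.mk h g ≠ 0 :=
    right_ne_zero_of_geom_sum₂_eq_zero hl.ne_zero (Semifield.isCoprime_iff.1 (hfg.map _)) hsum
  intro r
  rw [← AdjoinRoot.mk_eq_zero, map_sub, map_pow, map_pow, sub_eq_zero]
  exact pow_eq_pow_iff_dvd_of_geom_sum₂_eq_zero hlK hg hsum r

theorem factor_PhiH_dvd_pow_sub_pow_iff {F : Type*} [Field F] (l : ℕ) (hl : l.Prime)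
    (hl5 : 5 ≤ l)
    (hirr : Irreducible (∑ i ∈ Finset.range l, (X : Polynomial F) ^ i))
    (f g : Polynomial F) (hfg : IsCoprime f g) (hf : 1 ≤ f.natDegree)
    (h : Polynomial F) (hh : Irreducible h) (hdvd : h ∣ PhiH l f g) :
    ∀ r : ℕ, h ∣ f ^ r - g ^ r ↔ l ∣ r :=
  factor_PhiH_dvd_pow_sub_pow_iff_general l hl hl5 hirr f g hfg h hh hdvd
end

section
/- Let l ≥ 5 be a prime and F a field such that the l-th cyclotomic polynomial Φ_l(X) is irreducible in F[x]. Assume the standing factorization hypothesis, and assume moreover that the formal derivative f′ ≠ 0 or g′ ≠ 0. Let θ := max(deg f, deg g). Then n ≤ θ and θ·(l² − 4l + 1) ≤ (l−1)²·n − 2l, i.e. n ≤ θ ≤ ((l−1)²n − 2l)/((l−1)² − 2l). -/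
/-!
Since `Φ_l` is irreducible of degree `l - 1 ≥ 2`, it has no root in `F`; so `Φ_l(u, v) ≠ 0` unless
`u = v = 0`, `x ↦ x ^ l` is injective on `F` and `l ≠ 0` in `F`. Hence `Φ_l(f, g)` has degree
`(l - 1) θ` and each `Φ_l(a_i x + b_i, c_i x + d_i)` has degree `l - 1`, and comparing degrees gives
`(l - 1) θ = l deg Ψ + (l - 1) ∑ r_i ≥ l deg Ψ + (l - 1) n`.

For the second bound apply Mason–Stothers to `f^l + (-g^l) + (g^l - f^l) = 0`; the Wronskian does
not vanish because `f' ≠ 0` or `g' ≠ 0`. As `g^l - f^l = (g - f) Φ_l(f, g)`, the radical of the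
product has degree at most `deg f + deg g + deg (f - g) + deg Ψ + n (l - 1)`. One more unit is
gained in each case: if `deg f ≠ deg g` then `deg f + deg g < 2θ`; if `f` and `g` have the same
degree and leading coefficient then `deg (f - g) < θ`; otherwise `g^l - f^l` has degree `lθ`, and
for `a, b` of equal degree the top coefficient of the Wronskian cancels, which sharpens
Mason–Stothers to `deg c + 2 ≤ deg rad (a b c)`. Thus `lθ + 2 ≤ 3θ + deg Ψ + n (l - 1)`;
multiplying by `l` and eliminating `deg Ψ` gives the bound.
-/

open Polynomial

/-- Two (invertible) matrices `(a₁,b₁;c₁,d₁)` and `(a₂,b₂;c₂,d₂)` are *essentially distinct*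
if there are no `α ∈ F*` and root of unity `μ ∈ F` with
`(a₂,b₂;c₂,d₂) = α·(μa₁,μb₁;c₁,d₁)` or `(a₂,b₂;c₂,d₂) = α·(μc₁,μd₁;a₁,b₁)`. -/
def EssDistinct {F : Type*} [Field F] (a₁ b₁ c₁ d₁ a₂ b₂ c₂ d₂ : F) : Prop :=
  ¬ ∃ (α μ : F) (k : ℕ), α ≠ 0 ∧ 0 < k ∧ μ ^ k = 1 ∧
      ((a₂ = α * (μ * a₁) ∧ b₂ = α * (μ * b₁) ∧ c₂ = α * c₁ ∧ d₂ = α * d₁) ∨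
       (a₂ = α * (μ * c₁) ∧ b₂ = α * (μ * d₁) ∧ c₂ = α * a₁ ∧ d₂ = α * b₁))

open UniqueFactorizationMonoid EuclideanDomain

section GeomSum

theorem geom_sum_ne_zero_of_irreducible {F : Type*} [Field F] {l : ℕ} (hl : l.Prime)
    (hl2 : l ≠ 2) (hirr : Irreducible (∑ i ∈ Finset.range l, (X : F[X]) ^ i)) (x : F) :
    ∑ i ∈ Finset.range l, x ^ i ≠ 0 := by
  have := Fact.mk hl
  rw [← cyclotomic_prime] at hirr
  intro hx
  have hdeg := degree_eq_one_of_irreducible_of_root hirr (x := x)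
    (by simpa [cyclotomic_prime, eval_finsetSum] using hx)
  rw [degree_cyclotomic, Nat.totient_prime hl] at hdeg
  have : l - 1 = 1 := by exact_mod_cast hdeg
  have := hl.two_le
  omega

theorem geom_sum₂_mul_eq_pow_mul_geom_sum {R : Type*} [CommSemiring R] (x v : R) (n : ℕ) :
    ∑ i ∈ Finset.range n, (x * v) ^ i * v ^ (n - 1 - i) =
      v ^ (n - 1) * ∑ i ∈ Finset.range n, x ^ i := by
  rw [Finset.mul_sum]
  refine Finset.sum_congr rfl fun i hi => ?_
  have hi : i + (n - 1 - i) = n - 1 := by have := Finset.mem_range.mp hi; omega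
  rw [mul_pow, mul_assoc, ← pow_add, hi, mul_comm]

variable {F : Type*} [Field F] {l : ℕ}

theorem geom_sum₂_ne_zero (hroot : ∀ x : F, ∑ i ∈ Finset.range l, x ^ i ≠ 0) {u v : F}
    (huv : u ≠ 0 ∨ v ≠ 0) : ∑ i ∈ Finset.range l, u ^ i * v ^ (l - 1 - i) ≠ 0 := by
  wlog hv : v ≠ 0 generalizing u v
  · rw [geom_sum₂_comm]
    exact this huv.symm (huv.resolve_right hv)
  rw [← div_mul_cancel₀ u hv, geom_sum₂_mul_eq_pow_mul_geom_sum]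
  exact mul_ne_zero (pow_ne_zero _ hv) (hroot _)

theorem eq_of_pow_eq_of_geom_sum_ne_zero (hroot : ∀ x : F, ∑ i ∈ Finset.range l, x ^ i ≠ 0)
    {u v : F} (h : u ^ l = v ^ l) : u = v := by
  by_contra huv
  have hS := geom_sum₂_ne_zero hroot (u := u) (v := v) (by contrapose! huv; rw [huv.1, huv.2])
  have := geom_sum₂_mul u v l
  rw [h, sub_self] at this
  exact mul_ne_zero hS (sub_ne_zero.mpr huv) this

theorem natCast_ne_zero_of_geom_sum_ne_zero (hroot : ∀ x : F, ∑ i ∈ Finset.range l, x ^ i ≠ 0) :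
    (l : F) ≠ 0 := by
  simpa using hroot 1

end GeomSum

section PhiH

variable {F : Type*} [Field F] {l m : ℕ} {p q : F[X]}

theorem PhiH_mul_sub (l : ℕ) (p q : F[X]) : PhiH l p q * (p - q) = p ^ l - q ^ l :=
  geom_sum₂_mul p q l

theorem natDegree_PhiH_le_s7 (hp : p.natDegree ≤ m) (hq : q.natDegree ≤ m) :
    (PhiH l p q).natDegree ≤ (l - 1) * m := by
  refine natDegree_sum_le_of_forall_le _ _ fun j hj => natDegree_mul_le.trans ?_
  have hj : j + (l - 1 - j) = l - 1 := by have := Finset.mem_range.mp hj; omega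
  calc (p ^ j).natDegree + (q ^ (l - 1 - j)).natDegree ≤ j * m + (l - 1 - j) * m :=
        add_le_add (natDegree_pow_le_of_le j hp) (natDegree_pow_le_of_le _ hq)
    _ = (l - 1) * m := by rw [← add_mul, hj]

theorem coeff_PhiH_of_natDegree_le_s7 (hp : p.natDegree ≤ m) (hq : q.natDegree ≤ m) :
    (PhiH l p q).coeff ((l - 1) * m) =
      ∑ j ∈ Finset.range l, p.coeff m ^ j * q.coeff m ^ (l - 1 - j) := by
  rw [PhiH, finsetSum_coeff]
  refine Finset.sum_congr rfl fun j hj => ?_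
  have hj : (l - 1) * m = j * m + (l - 1 - j) * m := by
    have := Finset.mem_range.mp hj
    rw [← add_mul]; congr 1; omega
  rw [hj, coeff_mul_add_eq_of_natDegree_le (natDegree_pow_le_of_le j hp)
    (natDegree_pow_le_of_le _ hq), coeff_pow_of_natDegree_le hp, coeff_pow_of_natDegree_le hq]

theorem coeff_PhiH_ne_zero (hroot : ∀ x : F, ∑ i ∈ Finset.range l, x ^ i ≠ 0)
    (hp : p.natDegree ≤ m) (hq : q.natDegree ≤ m) (h : p.coeff m ≠ 0 ∨ q.coeff m ≠ 0) :
    (PhiH l p q).coeff ((l - 1) * m) ≠ 0 := by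
  rw [coeff_PhiH_of_natDegree_le_s7 hp hq]
  exact geom_sum₂_ne_zero hroot h

theorem natDegree_PhiH (hroot : ∀ x : F, ∑ i ∈ Finset.range l, x ^ i ≠ 0)
    (hp : p.natDegree ≤ m) (hq : q.natDegree ≤ m) (h : p.coeff m ≠ 0 ∨ q.coeff m ≠ 0) :
    (PhiH l p q).natDegree = (l - 1) * m :=
  (natDegree_PhiH_le_s7 hp hq).antisymm (le_natDegree_of_ne_zero (coeff_PhiH_ne_zero hroot hp hq h))

theorem PhiH_ne_zero (hroot : ∀ x : F, ∑ i ∈ Finset.range l, x ^ i ≠ 0)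
    (hp : p.natDegree ≤ m) (hq : q.natDegree ≤ m) (h : p.coeff m ≠ 0 ∨ q.coeff m ≠ 0) :
    PhiH l p q ≠ 0 := fun h0 => coeff_PhiH_ne_zero hroot hp hq h (by rw [h0, coeff_zero])

theorem coeff_max_natDegree_ne_zero (hp : p ≠ 0) (hq : q ≠ 0) :
    p.coeff (max p.natDegree q.natDegree) ≠ 0 ∨ q.coeff (max p.natDegree q.natDegree) ≠ 0 := by
  rcases max_choice p.natDegree q.natDegree with h | h <;> rw [h]
  · exact .inl (leadingCoeff_ne_zero.mpr hp)
  · exact .inr (leadingCoeff_ne_zero.mpr hq)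

theorem natDegree_PhiH_linear (hroot : ∀ x : F, ∑ i ∈ Finset.range l, x ^ i ≠ 0) {a b c d : F}
    (hdet : a * d - b * c ≠ 0) : (PhiH l (C a * X + C b) (C c * X + C d)).natDegree = l - 1 := by
  have h : (C a * X + C b).coeff 1 ≠ 0 ∨ (C c * X + C d).coeff 1 ≠ 0 := by
    simp only [coeff_add, coeff_C_mul_X, coeff_C, one_ne_zero, if_true, if_false, add_zero]
    by_contra! hac
    exact hdet (by rw [hac.1, hac.2]; ring)
  simpa using natDegree_PhiH hroot natDegree_linear_le natDegree_linear_le h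

end PhiH

section Factorization

variable {F : Type*} [Field F]

theorem natDegree_C_mul_pow_mul_prod {ι : Type*} {α : F} {Ψ : F[X]} {l : ℕ} {s : Finset ι}
    {Φ : ι → F[X]} {r : ι → ℕ} (h : C α * Ψ ^ l * ∏ i ∈ s, Φ i ^ r i ≠ 0) :
    (C α * Ψ ^ l * ∏ i ∈ s, Φ i ^ r i).natDegree =
      l * Ψ.natDegree + ∑ i ∈ s, r i * (Φ i).natDegree := by
  obtain ⟨⟨hα, hΨ⟩, hprod⟩ := mul_ne_zero_iff.mp h |>.imp_left mul_ne_zero_iff.mp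
  rw [natDegree_mul (mul_ne_zero hα hΨ) hprod, natDegree_mul hα hΨ, natDegree_C, natDegree_pow,
    natDegree_prod _ _ (Finset.prod_ne_zero_iff.mp hprod), zero_add]
  simp only [natDegree_pow]

variable [DecidableEq F]

theorem natDegree_radical_mul_le (p q : F[X]) :
    (radical (p * q)).natDegree ≤ (radical p).natDegree + (radical q).natDegree := by
  rw [← natDegree_mul radical_ne_zero radical_ne_zero]
  exact natDegree_le_of_dvd radical_mul_dvd (mul_ne_zero radical_ne_zero radical_ne_zero)

theorem natDegree_radical_prod_le {ι : Type*} (s : Finset ι) (p : ι → F[X]) :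
    (radical (∏ i ∈ s, p i)).natDegree ≤ ∑ i ∈ s, (radical (p i)).natDegree := by
  rw [← natDegree_prod _ _ fun i _ => radical_ne_zero]
  exact natDegree_le_of_dvd radical_prod_dvd
    (Finset.prod_ne_zero_iff.mpr fun i _ => radical_ne_zero)

theorem natDegree_radical_pow_le (p : F[X]) (k : ℕ) :
    (radical (p ^ k)).natDegree ≤ p.natDegree :=
  (natDegree_le_of_dvd radical_pow_dvd radical_ne_zero).trans natDegree_radical_le

theorem natDegree_radical_C_mul_pow_mul_prod_le {ι : Type*} (α : F) (Ψ : F[X]) (l : ℕ)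
    (s : Finset ι) (Φ : ι → F[X]) (r : ι → ℕ) :
    (radical (C α * Ψ ^ l * ∏ i ∈ s, Φ i ^ r i)).natDegree ≤
      Ψ.natDegree + ∑ i ∈ s, (Φ i).natDegree := by
  calc _ ≤ (radical (C α)).natDegree + (radical (Ψ ^ l)).natDegree +
        ∑ i ∈ s, (radical (Φ i ^ r i)).natDegree :=
        (natDegree_radical_mul_le _ _).trans <| add_le_add
          (natDegree_radical_mul_le _ _) (natDegree_radical_prod_le _ _)
    _ ≤ (C α).natDegree + Ψ.natDegree + ∑ i ∈ s, (Φ i).natDegree :=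
        add_le_add (add_le_add natDegree_radical_le (natDegree_radical_pow_le _ _))
          (Finset.sum_le_sum fun i _ => natDegree_radical_pow_le _ _)
    _ = Ψ.natDegree + ∑ i ∈ s, (Φ i).natDegree := by rw [natDegree_C, zero_add]

end Factorization

section Mason

theorem IsCoprime.of_add_add_eq_zero {R : Type*} [CommRing R] {a b c : R} (hab : IsCoprime a b)
    (hsum : a + b + c = 0) : IsCoprime b c := by
  rw [← neg_eq_of_add_eq_zero_right hsum, IsCoprime.neg_right_iff]
  simpa using hab.symm.add_mul_left_right 1

theorem natDegree_wronskian_add_two_le {R : Type*} [CommRing R] {a b : R[X]}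
    (hw : wronskian a b ≠ 0) (hab : a.natDegree = b.natDegree) :
    (wronskian a b).natDegree + 2 ≤ a.natDegree + b.natDegree := by
  have hlt := natDegree_wronskian_lt_add hw
  set m := b.natDegree
  -- the leading terms `a_m m b_m` of `a b'` and `a' b` cancel
  have hcoeff : (wronskian a b).coeff (m + (m - 1)) = 0 := by
    have hm : m - 1 + 1 = m := by omega
    have hda : (derivative a).natDegree ≤ m - 1 := by have := natDegree_derivative_le a; omega
    have hdb : (derivative b).natDegree ≤ m - 1 := by have := natDegree_derivative_le b; omega
    rw [wronskian, coeff_sub, coeff_mul_add_eq_of_natDegree_le hab.le hdb, add_comm m,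
      coeff_mul_add_eq_of_natDegree_le hda le_rfl, coeff_derivative, coeff_derivative, hm]
    ring
  have hne : (wronskian a b).natDegree ≠ m + (m - 1) := fun h =>
    leadingCoeff_ne_zero.mpr hw (by rw [leadingCoeff, h, hcoeff])
  omega

variable {F : Type*} [Field F]

theorem natDegree_pow_sub_pow_of_leadingCoeff_ne {l : ℕ}
    (hroot : ∀ x : F, ∑ i ∈ Finset.range l, x ^ i ≠ 0) {p q : F[X]}
    (hdeg : p.natDegree = q.natDegree) (hlc : p.leadingCoeff ≠ q.leadingCoeff) :
    (p ^ l - q ^ l).natDegree = l * p.natDegree := by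
  refine (natDegree_sub_le_of_le (natDegree_pow_le_of_le l le_rfl)
    (natDegree_pow_le_of_le l hdeg.ge)).trans (max_self _).le |>.antisymm
      (le_natDegree_of_ne_zero ?_)
  rw [coeff_sub, coeff_pow_of_natDegree_le le_rfl, coeff_pow_of_natDegree_le hdeg.ge, hdeg,
    sub_ne_zero]
  exact fun h => hlc <| by
    rw [leadingCoeff, leadingCoeff, hdeg]; exact eq_of_pow_eq_of_geom_sum_ne_zero hroot h

theorem ne_zero_of_isCoprime_of_derivative_ne_zero {f g : F[X]} (hfg : IsCoprime f g)
    (hder : derivative f ≠ 0 ∨ derivative g ≠ 0) : f ≠ 0 ∧ g ≠ 0 ∧ f ≠ g := by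
  have hunit {p : F[X]} (h : IsUnit p) : derivative p = 0 :=
    derivative_of_natDegree_zero (natDegree_eq_zero_of_isUnit h)
  refine ⟨?_, ?_, ?_⟩ <;> rintro rfl
  · simp [hunit (isCoprime_zero_left.mp hfg)] at hder
  · simp [hunit (isCoprime_zero_right.mp hfg)] at hder
  · simp [hunit (isCoprime_self.mp hfg)] at hder

theorem wronskian_pow_neg_pow_ne_zero {l : ℕ} (hl : (l : F) ≠ 0) {f g : F[X]}
    (hfg : IsCoprime f g) (hf : f ≠ 0) (hg : g ≠ 0)
    (hder : derivative f ≠ 0 ∨ derivative g ≠ 0) : wronskian (f ^ l) (-(g ^ l)) ≠ 0 := by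
  rw [Ne, hfg.pow.neg_right.wronskian_eq_zero_iff, derivative_neg, neg_eq_zero, derivative_pow,
    derivative_pow]
  simp only [mul_eq_zero, C_eq_zero, hl, pow_eq_zero_iff', hf, hg, false_or, false_and]
  tauto

variable [DecidableEq F]

theorem divRadical_mul_mul_dvd_wronskian {a b c : F[X]} (hab : IsCoprime a b)
    (hsum : a + b + c = 0) : divRadical (a * b * c) ∣ wronskian a b := by
  have hbc := hab.of_add_add_eq_zero hsum
  have hca : IsCoprime c a := hbc.of_add_add_eq_zero (by linear_combination hsum)
  have hcw : divRadical c ∣ wronskian a b :=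
    wronskian_eq_of_sum_zero hsum ▸ divRadical_dvd_wronskian_right b c
  rw [divRadical_mul (hca.symm.mul_left hbc), divRadical_mul hab]
  exact (hca.divRadical.symm.mul_left hbc.divRadical).mul_dvd
    (hab.divRadical.mul_dvd (divRadical_dvd_wronskian_left a b)
      (divRadical_dvd_wronskian_right a b)) hcw

theorem natDegree_add_two_le_natDegree_radical {a b c : F[X]} (hab : IsCoprime a b)
    (hsum : a + b + c = 0) (hc : c ≠ 0) (hw : wronskian a b ≠ 0)
    (hdeg : a.natDegree = b.natDegree) :
    c.natDegree + 2 ≤ (radical (a * b * c)).natDegree := by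
  have ha : a ≠ 0 := by rintro rfl; exact hw (wronskian_zero_left b)
  have hb : b ≠ 0 := by rintro rfl; exact hw (wronskian_zero_right a)
  have habc : a * b * c ≠ 0 := mul_ne_zero (mul_ne_zero ha hb) hc
  have hdiv : (divRadical (a * b * c)).natDegree ≤ (wronskian a b).natDegree :=
    natDegree_le_of_dvd (divRadical_mul_mul_dvd_wronskian hab hsum) hw
  have hsplit : (a * b * c).natDegree =
      (radical (a * b * c)).natDegree + (divRadical (a * b * c)).natDegree := by
    rw [← natDegree_mul radical_ne_zero (divRadical_ne_zero habc), radical_mul_divRadical]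
  rw [natDegree_mul (mul_ne_zero ha hb) hc, natDegree_mul ha hb] at hsplit
  have := natDegree_wronskian_add_two_le hw hdeg
  omega

theorem natDegree_radical_pow_mul_neg_pow_mul_sub_le (l : ℕ) (f g : F[X]) :
    (radical (f ^ l * -(g ^ l) * (g ^ l - f ^ l))).natDegree ≤
      f.natDegree + g.natDegree + (f - g).natDegree + (radical (PhiH l f g)).natDegree := by
  rw [show f ^ l * -(g ^ l) * (g ^ l - f ^ l) = f ^ l * g ^ l * (PhiH l f g * (f - g)) by
    rw [PhiH_mul_sub]; ring]
  have := natDegree_radical_mul_le (f ^ l * g ^ l) (PhiH l f g * (f - g))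
  have := natDegree_radical_mul_le (f ^ l) (g ^ l)
  have := natDegree_radical_mul_le (PhiH l f g) (f - g)
  have := natDegree_radical_pow_le f l
  have := natDegree_radical_pow_le g l
  have := natDegree_radical_le (a := f - g)
  omega

theorem mul_max_natDegree_add_two_le {l : ℕ} (hroot : ∀ x : F, ∑ i ∈ Finset.range l, x ^ i ≠ 0)
    {f g : F[X]} (hfg : IsCoprime f g) (hder : derivative f ≠ 0 ∨ derivative g ≠ 0) :
    l * max f.natDegree g.natDegree + 2 ≤
      3 * max f.natDegree g.natDegree + (radical (PhiH l f g)).natDegree := by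
  obtain ⟨hf, hg, hne⟩ := ne_zero_of_isCoprime_of_derivative_ne_zero hfg hder
  have hsum : f ^ l + -(g ^ l) + (g ^ l - f ^ l) = 0 := by ring
  have hab : IsCoprime (f ^ l) (-(g ^ l)) := hfg.pow.neg_right
  have hw := wronskian_pow_neg_pow_ne_zero (natCast_ne_zero_of_geom_sum_ne_zero hroot)
    hfg hf hg hder
  have hc : g ^ l - f ^ l ≠ 0 := by
    rw [← neg_sub, ← PhiH_mul_sub]
    exact neg_ne_zero.mpr (mul_ne_zero (PhiH_ne_zero hroot (le_max_left _ _) (le_max_right _ _)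
      (coeff_max_natDegree_ne_zero hf hg)) (sub_ne_zero.mpr hne))
  have hrad := natDegree_radical_pow_mul_neg_pow_mul_sub_le l f g
  obtain ⟨hA, hB, -⟩ := (Polynomial.abc (pow_ne_zero l hf) (neg_ne_zero.mpr (pow_ne_zero l hg))
    hc hab hsum).resolve_right fun h => hw (hab.wronskian_eq_zero_iff.mpr ⟨h.1, h.2.1⟩)
  rw [natDegree_pow] at hA
  rw [natDegree_neg, natDegree_pow] at hB
  have hsub : (f - g).natDegree ≤ max f.natDegree g.natDegree := natDegree_sub_le f g
  rcases lt_trichotomy f.natDegree g.natDegree with hlt | hdeg | hlt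
  · rw [max_eq_right hlt.le] at hsub ⊢
    omega
  · rw [← hdeg, max_self] at hsub ⊢
    by_cases hlc : f.leadingCoeff = g.leadingCoeff
    · have hlt : (f - g).natDegree < f.natDegree := natDegree_lt_natDegree (sub_ne_zero.mpr hne)
        (degree_sub_lt_left (by rw [degree_eq_natDegree hf, degree_eq_natDegree hg, hdeg]) hf hlc)
      omega
    · have hC := natDegree_add_two_le_natDegree_radical hab hsum hc hw
        (by rw [natDegree_pow, natDegree_neg, natDegree_pow, hdeg])
      rw [natDegree_pow_sub_pow_of_leadingCoeff_ne hroot hdeg.symm (Ne.symm hlc), ← hdeg] at hC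
      omega
  · rw [max_eq_left hlt.le] at hsub ⊢
    omega

end Mason

theorem stmt7_general {F : Type*} [Field F] (l : ℕ) (hl : l.Prime) (hl5 : 5 ≤ l)
    (hirr : Irreducible (∑ i ∈ Finset.range l, (X : Polynomial F) ^ i))
    (f g : Polynomial F) (hfg : IsCoprime f g)
    (α : F) (Ψ : Polynomial F)
    (n : ℕ)
    (a b c d : Fin n → F) (hdet : ∀ i, a i * d i - b i * c i ≠ 0)
    (r : Fin n → ℕ) (hr : ∀ i, 1 ≤ r i)
    (heq : PhiH l f g = C α * Ψ ^ l *
      ∏ i, (PhiH l (C (a i) * X + C (b i)) (C (c i) * X + C (d i))) ^ r i)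
    (hder : derivative f ≠ 0 ∨ derivative g ≠ 0) :
    n ≤ max f.natDegree g.natDegree ∧
      (max f.natDegree g.natDegree : ℤ) * ((l : ℤ) ^ 2 - 4 * l + 1) ≤
        ((l : ℤ) - 1) ^ 2 * n - 2 * l := by
  classical
  have hroot := geom_sum_ne_zero_of_irreducible hl (by omega) hirr
  obtain ⟨hf, hg, -⟩ := ne_zero_of_isCoprime_of_derivative_ne_zero hfg hder
  have hΦ (i : Fin n) :
      (PhiH l (C (a i) * X + C (b i)) (C (c i) * X + C (d i))).natDegree = l - 1 :=
    natDegree_PhiH_linear hroot (hdet i)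
  have htop := coeff_max_natDegree_ne_zero hf hg
  have hPhi := PhiH_ne_zero (l := l) hroot (le_max_left _ _) (le_max_right _ _) htop
  have hdeg : (l - 1) * max f.natDegree g.natDegree = l * Ψ.natDegree + ∑ i, r i * (l - 1) := by
    rw [← natDegree_PhiH hroot (le_max_left _ _) (le_max_right _ _) htop, heq,
      natDegree_C_mul_pow_mul_prod (heq ▸ hPhi)]
    simp only [hΦ]
  have hrad : (radical (PhiH l f g)).natDegree ≤ Ψ.natDegree + n * (l - 1) := by
    rw [heq]
    refine (natDegree_radical_C_mul_pow_mul_prod_le α Ψ l Finset.univ _ r).trans_eq ?_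
    simp only [hΦ, Finset.sum_const, Finset.card_univ, Fintype.card_fin, smul_eq_mul]
  have hkey := mul_max_natDegree_add_two_le hroot hfg hder
  have hsum : (l - 1) * n ≤ ∑ i, r i * (l - 1) := by
    simpa [mul_comm] using Finset.sum_le_sum fun i (_ : i ∈ Finset.univ) =>
      Nat.le_mul_of_pos_left (l - 1) (hr i)
  refine ⟨Nat.le_of_mul_le_mul_left (by omega) (by omega : 0 < l - 1), ?_⟩
  rw [← Nat.cast_max]
  generalize max f.natDegree g.natDegree = θ at hdeg hkey ⊢
  zify [(by omega : 1 ≤ l)] at hdeg hrad hkey hsum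
  nlinarith [mul_le_mul_of_nonneg_left hkey (by positivity : (0 : ℤ) ≤ l)]

theorem stmt7 {F : Type*} [Field F] (l : ℕ) (hl : l.Prime) (hl5 : 5 ≤ l)
    (hirr : Irreducible (∑ i ∈ Finset.range l, (X : Polynomial F) ^ i))
    (f g : Polynomial F) (hfg : IsCoprime f g)
    (hθ : 1 ≤ max f.natDegree g.natDegree)
    (α : F) (hα : α ≠ 0) (Ψ : Polynomial F) (hΨ : Ψ ≠ 0)
    (n : ℕ) (hn1 : 1 ≤ n)
    (a b c d : Fin n → F) (hdet : ∀ i, a i * d i - b i * c i ≠ 0)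
    (hed : ∀ i j, i ≠ j →
      EssDistinct (a i) (b i) (c i) (d i) (a j) (b j) (c j) (d j))
    (r : Fin n → ℕ) (hr : ∀ i, 1 ≤ r i)
    (heq : PhiH l f g = C α * Ψ ^ l *
      ∏ i, (PhiH l (C (a i) * X + C (b i)) (C (c i) * X + C (d i))) ^ r i)
    (hder : derivative f ≠ 0 ∨ derivative g ≠ 0) :
    n ≤ max f.natDegree g.natDegree ∧
      (max f.natDegree g.natDegree : ℤ) * ((l : ℤ) ^ 2 - 4 * l + 1) ≤
        ((l : ℤ) - 1) ^ 2 * n - 2 * l :=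
  stmt7_general l hl hl5 hirr f g hfg α Ψ n a b c d hdet r hr heq hder
end

section
/- Let l ≥ 5 be a prime and F a field of characteristic 0 such that the l-th cyclotomic polynomial Φ_l(X) is irreducible in F[x]. Let f, g ∈ F[x] be relatively prime, not both constant. If Φ_l(f,g) has a multiple root in an algebraic closure of F (i.e. Φ_l(f,g) is not squarefree), then l ≤ 2θ − 1, where θ := max(deg f, deg g). -/
/-!
Let `q` be an irreducible factor with `q² ∣ Φ_l(f,g)`. Since `Φ_l(f,g) (f - g) = f^l - g^l`,
`q` divides both `f^l - g^l` and `f^(l-1) f' - g^(l-1) g'`, and these combine to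
`q ∣ f^(l-1) W(f,g)` for the Wronskian `W(f,g) = f g' - f' g`; coprimality gives `q ∤ f`, so
`q ∣ W(f,g)`, which is nonzero of degree at most `2θ - 2`. On the other hand `f/g` is a root of
`Φ_l` in `F[x]/(q)`, so by irreducibility of `Φ_l` the degree of `q` is at least `l - 1`.
-/

open Polynomial

open Finset

theorem geom_sum₂_eq_pow_mul_geom_sum_div {K : Type*} [Field K] {b : K} (hb : b ≠ 0) (a : K)
    (n : ℕ) :
    ∑ i ∈ range n, a ^ i * b ^ (n - 1 - i) = b ^ (n - 1) * ∑ i ∈ range n, (a / b) ^ i := by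
  rw [mul_sum]
  refine sum_congr rfl fun i hi => ?_
  rw [div_pow, pow_sub₀ b hb (Nat.le_sub_one_of_lt (mem_range.mp hi))]
  field_simp

namespace Polynomial

theorem wronskian_ne_zero_of_isCoprime {R : Type*} [CommRing R] [NoZeroDivisors R]
    [IsAddTorsionFree R] {f g : R[X]} (hfg : IsCoprime f g)
    (hconst : ¬ (f.natDegree = 0 ∧ g.natDegree = 0)) : wronskian f g ≠ 0 := by
  rwa [Ne, hfg.wronskian_eq_zero_iff, derivative_eq_zero, derivative_eq_zero]

variable {F : Type*} [Field F]

theorem natDegree_wronskian_le (f g : F[X]) :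
    (wronskian f g).natDegree ≤ 2 * max f.natDegree g.natDegree - 2 := by
  by_cases hW : wronskian f g = 0
  · simp [hW]
  have hlt := natDegree_wronskian_lt_add hW
  obtain hne | heq := ne_or_eq f.natDegree g.natDegree
  · omega
  have hf : f ≠ 0 := by rintro rfl; simp [wronskian_zero_left] at hW
  have hg : g ≠ 0 := by rintro rfl; simp [wronskian_zero_right] at hW
  have hc : g.leadingCoeff / f.leadingCoeff ≠ 0 := by simp [hf, hg]
  -- subtracting a multiple of `f` from `g` kills the leading term without changing the Wronskian
  set r := g - C (g.leadingCoeff / f.leadingCoeff) * f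
  have hWr : wronskian f r = wronskian f g := by
    simp only [r, wronskian, derivative_sub, derivative_mul, derivative_C]
    ring
  have hr : r.natDegree < g.natDegree := by
    refine natDegree_lt_natDegree (fun h => hW (by rw [← hWr, h, wronskian_zero_right])) ?_
    refine degree_sub_lt_left ?_ hg ?_
    · rw [degree_C_mul hc, degree_eq_natDegree hf, degree_eq_natDegree hg, heq]
    · rw [leadingCoeff_mul, leadingCoeff_C, div_mul_cancel₀ _ (leadingCoeff_ne_zero.mpr hf)]
  have := natDegree_wronskian_lt_add (hWr ▸ hW)
  rw [hWr] at this
  omega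

theorem dvd_pow_sub_pow_of_dvd_PhiH {l : ℕ} {f g q : F[X]} (h : q ∣ PhiH l f g) :
    q ∣ f ^ l - g ^ l :=
  h.trans (Dvd.intro _ (geom_sum₂_mul f g l))

theorem _root_.Prime.dvd_iff_dvd_of_dvd_pow_sub_pow {R : Type*} [CommRing R] {l : ℕ}
    (hl : l ≠ 0) {f g q : R} (hq : Prime q) (h : q ∣ f ^ l - g ^ l) : q ∣ f ↔ q ∣ g := by
  constructor
  · exact fun hf => hq.dvd_of_dvd_pow ((dvd_sub_right (dvd_pow hf hl)).mp h)
  · exact fun hg => hq.dvd_of_dvd_pow ((dvd_sub_left (dvd_pow hg hl)).mp h)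

theorem dvd_wronskian_of_mul_self_dvd_PhiH {l : ℕ} (hl : (l : F) ≠ 0) {f g q : F[X]}
    (hq : Prime q) (hqf : ¬ q ∣ f) (hqq : q * q ∣ PhiH l f g) : q ∣ wronskian f g := by
  obtain ⟨k, rfl⟩ : ∃ k, l = k + 1 :=
    Nat.exists_eq_succ_of_ne_zero (by rintro rfl; simp at hl)
  have hP : q ∣ PhiH (k + 1) f g := dvd_of_mul_left_dvd hqq
  have hpow : q ∣ f ^ (k + 1) - g ^ (k + 1) := dvd_pow_sub_pow_of_dvd_PhiH hP
  have hder : q ∣ f ^ k * derivative f - g ^ k * derivative g := by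
    have hP' : q ∣ derivative (PhiH (k + 1) f g) := by
      simpa using pow_sub_one_dvd_derivative_of_pow_dvd (n := 2) (by rwa [sq])
    have h : q ∣ derivative (PhiH (k + 1) f g * (f - g)) := by
      rw [derivative_mul]
      exact dvd_add (hP'.mul_right _) (hP.mul_right _)
    have hC : IsUnit (C ((k + 1 : ℕ) : F)) := isUnit_C.mpr (isUnit_iff_ne_zero.mpr hl)
    rw [PhiH, geom_sum₂_mul, derivative_sub, derivative_pow, derivative_pow, Nat.add_sub_cancel,
      mul_assoc, mul_assoc, ← mul_sub] at h
    exact hC.dvd_mul_left.mp h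
  have key : f ^ k * wronskian f g = derivative g * (f ^ (k + 1) - g ^ (k + 1)) -
      g * (f ^ k * derivative f - g ^ k * derivative g) := by
    rw [wronskian]
    ring
  have hfW : q ∣ f ^ k * wronskian f g := key ▸ dvd_sub (hpow.mul_left _) (hder.mul_left _)
  exact (hq.dvd_or_dvd hfW).resolve_left (mt hq.dvd_of_dvd_pow hqf)

theorem sub_one_le_natDegree_of_dvd_PhiH {l : ℕ}
    (hirr : Irreducible (∑ i ∈ range l, (X : F[X]) ^ i)) {f g q : F[X]}
    (hq : Irreducible q) (hqg : ¬ q ∣ g) (hqP : q ∣ PhiH l f g) :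
    l - 1 ≤ q.natDegree := by
  have hl : l ≠ 0 := by rintro rfl; simp at hirr
  have := Fact.mk hq
  set b := AdjoinRoot.mk q g
  have hb : b ≠ 0 := mt AdjoinRoot.mk_eq_zero.mp hqg
  have hroot : aeval (AdjoinRoot.mk q f / b) (∑ i ∈ range l, (X : F[X]) ^ i) = 0 := by
    have h : b ^ (l - 1) * ∑ i ∈ range l, (AdjoinRoot.mk q f / b) ^ i = 0 := by
      rw [← geom_sum₂_eq_pow_mul_geom_sum_div hb, ← AdjoinRoot.mk_eq_zero.mpr hqP, PhiH]
      simp [b]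
    simpa [hb] using h
  have hmin := minpoly.eq_of_irreducible_of_monic hirr hroot (monic_geom_sum_X hl)
  have := (AdjoinRoot.powerBasis hq.ne_zero).finite
  calc l - 1 ≤ (∑ i ∈ range l, (X : F[X]) ^ i).natDegree :=
        le_natDegree_of_ne_zero (by simp [finsetSum_coeff, coeff_X_pow, hl])
    _ = (minpoly F (AdjoinRoot.mk q f / b)).natDegree := by rw [hmin]
    _ ≤ Module.finrank F (AdjoinRoot q) := minpoly.natDegree_le _
    _ = q.natDegree := (AdjoinRoot.powerBasis hq.ne_zero).finrank

end Polynomial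

theorem le_of_not_squarefree_PhiH_general {F : Type*} [Field F] [CharZero F]
    (l : ℕ)
    (hirr : Irreducible (∑ i ∈ Finset.range l, (X : Polynomial F) ^ i))
    (f g : Polynomial F) (hfg : IsCoprime f g)
    (hconst : ¬ (f.natDegree = 0 ∧ g.natDegree = 0))
    (hsq : ¬ Squarefree (PhiH l f g)) :
    l ≤ 2 * max f.natDegree g.natDegree - 1 := by
  obtain ⟨q, hq, hqq⟩ : ∃ q, Irreducible q ∧ q * q ∣ PhiH l f g := by
    simpa [squarefree_iff_irreducible_sq_not_dvd_of_exists_irreducible ⟨X, irreducible_X⟩]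
      using hsq
  have hl : l ≠ 0 := by rintro rfl; simp at hirr
  have hqP : q ∣ PhiH l f g := dvd_of_mul_left_dvd hqq
  have hqfg := hq.prime.dvd_iff_dvd_of_dvd_pow_sub_pow hl (dvd_pow_sub_pow_of_dvd_PhiH hqP)
  have hqf : ¬ q ∣ f := fun h => hq.not_isUnit (hfg.isUnit_of_dvd' h (hqfg.mp h))
  have hW := wronskian_ne_zero_of_isCoprime hfg hconst
  have h₁ := sub_one_le_natDegree_of_dvd_PhiH hirr hq (hqfg.not.mp hqf) hqP
  have h₂ := natDegree_le_of_dvd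
    (dvd_wronskian_of_mul_self_dvd_PhiH (Nat.cast_ne_zero.mpr hl) hq.prime hqf hqq) hW
  have h₃ := natDegree_wronskian_le f g
  omega

theorem le_of_not_squarefree_PhiH {F : Type*} [Field F] [CharZero F]
    (l : ℕ) (hl : l.Prime) (hl5 : 5 ≤ l)
    (hirr : Irreducible (∑ i ∈ Finset.range l, (X : Polynomial F) ^ i))
    (f g : Polynomial F) (hfg : IsCoprime f g)
    (hconst : ¬ (f.natDegree = 0 ∧ g.natDegree = 0))
    (hsq : ¬ Squarefree (PhiH l f g)) :
    l ≤ 2 * max f.natDegree g.natDegree - 1 :=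
  le_of_not_squarefree_PhiH_general l hirr f g hfg hconst hsq
end

section
/- The only integer solutions (x,y) ∈ ℤ × ℤ of the diophantine equation x⁴ + x³y + x²(y²−1) + xy(y²−1) + (y²−1)² = 0 are (0,1), (−1,1), (0,−1) and (1,−1). -/
/-!
Completing the square gives `4 P(x, y) = (2x² + xy + 2y² - 2)² - x² (5y² - 4)`. For `x ≠ 0` a solution
therefore has `2x² + xy + 2y² - 2 = x t` with `t² = 5y² - 4`. Read as a quadratic in `x`, this equation has an
integer root only if its discriminant `4 (12 - 10y² - 2yt)` is nonnegative, and since `|t| < √5 |y|` this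
forces `y² ≤ 1`. The three remaining values of `y` are checked by hand.
-/

def quartic (x y : ℤ) : ℤ :=
  x ^ 4 + x ^ 3 * y + x ^ 2 * (y ^ 2 - 1) + x * y * (y ^ 2 - 1) + (y ^ 2 - 1) ^ 2

lemma four_mul_quartic (x y : ℤ) :
    4 * quartic x y = (2 * x ^ 2 + x * y + 2 * y ^ 2 - 2) ^ 2 - x ^ 2 * (5 * y ^ 2 - 4) := by
  unfold quartic; ring

lemma exists_eq_mul_and_sq_eq_of_sq_eq_sq_mul {R : Type*} [CommRing R] [IsDomain R]
    [IsIntegrallyClosed R] {a b x : R} (hx : x ≠ 0) (h : a ^ 2 = x ^ 2 * b) :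
    ∃ t, a = x * t ∧ t ^ 2 = b := by
  obtain ⟨t, rfl⟩ : x ∣ a := (IsIntegrallyClosed.pow_dvd_pow_iff two_ne_zero).mp ⟨b, h⟩
  refine ⟨t, rfl, mul_left_cancel₀ (pow_ne_zero 2 hx) ?_⟩
  rw [← h, mul_pow]

lemma sq_le_one_of_quartic_eq_zero {x y : ℤ} (h : quartic x y = 0) : y ^ 2 ≤ 1 := by
  rcases eq_or_ne x 0 with rfl | hx
  · have hy : (y ^ 2 - 1) ^ 2 = 0 := by simpa [quartic] using h
    nlinarith [pow_eq_zero_iff two_ne_zero |>.mp hy]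
  obtain ⟨t, hxt, ht⟩ := exists_eq_mul_and_sq_eq_of_sq_eq_sq_mul hx
    (a := 2 * x ^ 2 + x * y + 2 * y ^ 2 - 2) (b := 5 * y ^ 2 - 4)
    (by linear_combination 4 * h - four_mul_quartic x y)
  have hdisc : (4 * x + y - t) ^ 2 = 12 - 10 * y ^ 2 - 2 * y * t := by
    linear_combination 8 * hxt + ht
  nlinarith [sq_nonneg (4 * x + y - t), sq_nonneg (2 * t + 5 * y)]

lemma quartic_neg_one (x : ℤ) : quartic x (-1) = x ^ 3 * (x - 1) := by
  unfold quartic; ring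

lemma quartic_zero_pos (x : ℤ) : 0 < quartic x 0 := by
  unfold quartic; nlinarith [sq_nonneg (x ^ 2 - 1), sq_nonneg x]

lemma quartic_one (x : ℤ) : quartic x 1 = x ^ 3 * (x + 1) := by
  unfold quartic; ring

theorem diophantine_quartic_solutions (x y : ℤ) :
    x ^ 4 + x ^ 3 * y + x ^ 2 * (y ^ 2 - 1) + x * y * (y ^ 2 - 1) + (y ^ 2 - 1) ^ 2 = 0 ↔
      (x = 0 ∧ y = 1) ∨ (x = -1 ∧ y = 1) ∨ (x = 0 ∧ y = -1) ∨ (x = 1 ∧ y = -1) := by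
  change quartic x y = 0 ↔ _
  constructor
  · intro h
    obtain ⟨hy₁, hy₂⟩ := abs_le.mp ((sq_le_one_iff_abs_le_one y).mp (sq_le_one_of_quartic_eq_zero h))
    interval_cases y
    · rw [quartic_neg_one, mul_eq_zero, pow_eq_zero_iff three_ne_zero, sub_eq_zero] at h
      omega
    · exact absurd h (quartic_zero_pos x).ne'
    · rw [quartic_one, mul_eq_zero, pow_eq_zero_iff three_ne_zero, add_eq_zero_iff_eq_neg] at h
      omega
  · rintro (⟨rfl, rfl⟩ | ⟨rfl, rfl⟩ | ⟨rfl, rfl⟩ | ⟨rfl, rfl⟩) <;> rfl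
end

section
/- Let p be a prime, F a field, and α ∈ F an element satisfying α^p + α + 1 = 0 and α³ ≠ 1. Then Φ_p(α) = Φ_p(α³), where Φ_p(X) = Σ_{i=0}^{p−1} X^i is the p-th cyclotomic polynomial. -/
/-! Both sides are geometric sums. The relation `α ^ p = -α - 1` evaluates each of them to
`(α + 2) / (1 - α)`; for the cube this rests on `(α + 1) ^ 3 + 1 = (α + 2) * (α ^ 2 + α + 1)`. -/

open Finset

section

variable {F : Type*} [Field F] {n : ℕ} {x : F}

theorem geom_sum_eq_of_pow_eq_neg_sub_one (hx : x ≠ 1) (h : x ^ n = -x - 1) :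
    ∑ i ∈ range n, x ^ i = (x + 2) / (1 - x) := by
  rw [geom_sum_eq hx, h, div_eq_div_iff (sub_ne_zero.mpr hx) (sub_ne_zero.mpr hx.symm)]
  ring

theorem geom_sum_cube_eq_of_pow_eq_neg_sub_one (hx : x ^ 3 ≠ 1) (h : x ^ n = -x - 1) :
    ∑ i ∈ range n, (x ^ 3) ^ i = (x + 2) / (1 - x) := by
  have hx₁ : x ≠ 1 := by rintro rfl; exact hx (one_pow 3)
  rw [geom_sum_eq hx, ← pow_mul, mul_comm, pow_mul, h,
    div_eq_div_iff (sub_ne_zero.mpr hx) (sub_ne_zero.mpr hx₁.symm)]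
  ring

end

theorem phi_p_eq_phi_p_cube_general {F : Type*} [Field F] (p : ℕ) (α : F)
    (hroot : α ^ p + α + 1 = 0) (hcube : α ^ 3 ≠ 1) :
    ∑ i ∈ Finset.range p, α ^ i = ∑ i ∈ Finset.range p, (α ^ 3) ^ i := by
  have hpow : α ^ p = -α - 1 := by linear_combination hroot
  have hα : α ≠ 1 := by rintro rfl; exact hcube (one_pow 3)
  rw [geom_sum_eq_of_pow_eq_neg_sub_one hα hpow,
    geom_sum_cube_eq_of_pow_eq_neg_sub_one hcube hpow]

theorem phi_p_eq_phi_p_cube {F : Type*} [Field F] (p : ℕ) (hp : p.Prime) (α : F)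
    (hroot : α ^ p + α + 1 = 0) (hcube : α ^ 3 ≠ 1) :
    ∑ i ∈ Finset.range p, α ^ i = ∑ i ∈ Finset.range p, (α ^ 3) ^ i :=
  phi_p_eq_phi_p_cube_general p α hroot hcube
end

section
/- For every integer n ≥ 1 and every prime p, the polynomial Xⁿ + X^{n−1} + p is irreducible in ℚ[X]. -/
/-!
Every complex root `z` of `Xⁿ⁺¹ + Xⁿ + p` satisfies `|z| > 1`: otherwise
`p = |z|ⁿ |z + 1| ≤ |z + 1| ≤ 2`, so equality holds in the triangle inequality and `z = 1`,
which is not a root. In a factorization `f = g h` into monic integer polynomials,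
`g(0) h(0) = p`, so one factor, say `g`, has `|g(0)| = 1`; but `|g(0)|` is the product of the
absolute values of the roots of `g`, all greater than `1`, so `g` has no roots and is constant.
Gauss's lemma transfers irreducibility from `ℤ[X]` to `ℚ[X]`.
-/

open Polynomial

theorem Complex.one_lt_norm_of_pow_succ_add_pow_add_eq_zero {n : ℕ} {c : ℝ} (hc : 2 ≤ c)
    {z : ℂ} (hz : z ^ (n + 1) + z ^ n + c = 0) : 1 < ‖z‖ := by
  by_contra! hle
  have hc_eq : c = ‖z‖ ^ n * ‖z + 1‖ := by
    have : z ^ n * (z + 1) = -c := by linear_combination hz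
    simpa [abs_of_nonneg (by linarith : 0 ≤ c)] using (congrArg norm this).symm
  have hc_le : c ≤ ‖z + 1‖ := hc_eq ▸ mul_le_of_le_one_left (norm_nonneg _)
    (pow_le_one₀ (norm_nonneg z) hle)
  have htri : ‖z + 1‖ ≤ ‖z‖ + 1 := by simpa using norm_add_le z 1
  obtain rfl : z = 1 := eq_of_norm_eq_of_norm_add_eq (by rw [norm_one]; linarith)
    (by rw [norm_one]; linarith)
  norm_num [Complex.ext_iff] at hz
  linarith

theorem Polynomial.Monic.natDegree_eq_zero_of_norm_coeff_zero_le_one {K : Type*} [NormedField K]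
    [IsAlgClosed K] {g : K[X]} (hg : g.Monic) (h0 : ‖g.coeff 0‖ ≤ 1)
    (hroots : ∀ z ∈ g.roots, 1 < ‖z‖) : g.natDegree = 0 := by
  by_contra hdeg
  obtain ⟨r, hr⟩ : ∃ r, r ∈ g.roots := Multiset.card_pos_iff_exists_mem.mp
    (by rw [IsAlgClosed.card_roots_eq_natDegree]; omega)
  obtain ⟨t, ht⟩ := Multiset.exists_cons_of_mem hr
  have hcoeff : ‖g.coeff 0‖ = ‖r‖ * ‖t.prod‖ := by
    rw [(IsAlgClosed.splits g).coeff_zero_eq_prod_roots_of_monic hg, ht, norm_mul, norm_pow,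
      norm_neg, norm_one, one_pow, one_mul, Multiset.prod_cons, norm_mul]
  have ht_prod : 1 ≤ ‖t.prod‖ := by
    rw [← normHom_apply, map_multiset_prod]
    refine Multiset.one_le_prod ?_
    simp only [Multiset.mem_map]
    rintro _ ⟨z, hz, rfl⟩
    exact (hroots z (ht ▸ Multiset.mem_cons_of_mem hz)).le
  linarith [one_lt_mul_of_lt_of_le (hroots r hr) ht_prod]

theorem Polynomial.Monic.natDegree_eq_zero_of_isUnit_coeff_zero {g : ℤ[X]} (hg : g.Monic)
    (h0 : IsUnit (g.coeff 0)) (hroots : ∀ z : ℂ, aeval z g = 0 → 1 < ‖z‖) :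
    g.natDegree = 0 := by
  rw [← natDegree_map_eq_of_injective (algebraMap ℤ ℂ).injective_int g]
  refine (hg.map _).natDegree_eq_zero_of_norm_coeff_zero_le_one ?_ fun z hz => hroots z ?_
  · rcases Int.isUnit_iff.mp h0 with h | h <;> simp [coeff_map, h]
  · rwa [mem_roots (hg.map _).ne_zero, IsRoot, eval_map_algebraMap] at hz

theorem Polynomial.Monic.irreducible_of_prime_coeff_zero_of_one_lt_norm_roots {f : ℤ[X]}
    (hf : f.Monic) (h0 : Prime (f.coeff 0)) (hroots : ∀ z : ℂ, aeval z f = 0 → 1 < ‖z‖) :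
    Irreducible f := by
  refine hf.irreducible_iff_natDegree.2 ⟨by rintro rfl; simp at h0, fun g h hg hh hgh => ?_⟩
  have hroots_of_dvd {q : ℤ[X]} (hq : q ∣ f) (z : ℂ) (hz : aeval z q = 0) : 1 < ‖z‖ := by
    obtain ⟨r, rfl⟩ := hq
    exact hroots z (by rw [aeval_mul, hz, zero_mul])
  have hunit : IsUnit (g.coeff 0) ∨ IsUnit (h.coeff 0) :=
    h0.irreducible.isUnit_or_isUnit (by rw [← mul_coeff_zero, hgh])
  exact hunit.imp
    (hg.natDegree_eq_zero_of_isUnit_coeff_zero · (hroots_of_dvd (hgh ▸ dvd_mul_right g h)))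
    (hh.natDegree_eq_zero_of_isUnit_coeff_zero · (hroots_of_dvd (hgh ▸ dvd_mul_left h g)))

theorem irreducible_X_pow_add_X_pow_add_prime (n : ℕ) (hn : 1 ≤ n) (p : ℕ) (hp : p.Prime) :
    Irreducible ((X : Polynomial ℚ) ^ n + X ^ (n - 1) + C (p : ℚ)) := by
  obtain rfl | ⟨m, rfl⟩ : n = 1 ∨ ∃ m, n = m + 2 := by
    rcases Nat.exists_eq_add_of_le' hn with ⟨_ | m, rfl⟩ <;> simp
  · exact irreducible_of_degree_eq_one (by compute_degree!)
  set f : ℤ[X] := X ^ (m + 2) + X ^ (m + 1) + C (p : ℤ)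
  have hf : f.Monic := by unfold f; monicity!
  have hf0 : f.coeff 0 = p := by simp [f, coeff_X_pow]
  have hroots (z : ℂ) (hz : aeval z f = 0) : 1 < ‖z‖ :=
    Complex.one_lt_norm_of_pow_succ_add_pow_add_eq_zero (c := p) (by exact_mod_cast hp.two_le)
      (by simpa [f] using hz)
  have hf_irr := hf.irreducible_of_prime_coeff_zero_of_one_lt_norm_roots
    (hf0 ▸ Nat.prime_iff_prime_int.mp hp) hroots
  simpa [f] using (IsPrimitive.Int.irreducible_iff_irreducible_map_cast hf.isPrimitive).mp hf_irr
end
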